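/- arXiv:2410.12714 — 2 statements merged into one kernel-verified Lean document; each statement's English description precedes it below -/
import Mathlib

section
/- If m ≥ 1, (D, ξ) ∈ NestPer(m), 1 ≤ μ_3 ≤ μ_4 ≤ |z|, D ⊆ {μ_3,…,μ_4}, ξ_2 is a period of z[μ_3, μ_4], and μ_4 − μ_3 + 1 ≤ α ξ_2 for a positive integer α, then there exists G ⊆ {μ_3, …, μ_3 + ξ_2 − 1} such that ω(m, G) ≤ α and D ⊆ Spread(G, ξ_2). -/
namespace PalLen

variable {α : Type*}

/-- `u` is a palindrome (the empty word counts; "nonempty palindrome" adds `u ≠ []`). -/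
def IsPal (u : List α) : Prop := u.reverse = u

/-- `ξ` is a period of the word `t` (0-indexed: `t[i] = t[i+ξ]` whenever both indices are
valid); in particular every `ξ ≥ |t|` is a period. -/
def IsPeriod (t : List α) (ξ : ℕ) : Prop :=
  1 ≤ ξ ∧ ∀ i : ℕ, i + ξ < t.length → t[i]? = t[i + ξ]?

/-- the minimal period of `t` -/
noncomputable def mper (t : List α) : ℕ := sInf {ξ | IsPeriod t ξ}

/-- `order(t) = |t| / mper(t) ∈ ℚ` -/
noncomputable def wOrder (t : List α) : ℚ := (t.length : ℚ) / (mper t : ℚ)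

/-- a non-periodic palindromic couple -/
def PalCouple (p₁ p₂ : List α) : Prop :=
  IsPal p₁ ∧ IsPal p₂ ∧ p₂ ≠ [] ∧ wOrder (p₁ ++ p₂ ++ p₁) < 2

/-- `wpow w n = w^n` -/
def wpow (w : List α) : ℕ → List α
  | 0 => []
  | n + 1 => w ++ wpow w n

/-- `u` is a factor of the infinite word `w^∞` -/
def FactorOfPow (u w : List α) : Prop := ∃ n : ℕ, u <:+: wpow w n

/-- `u` is a prefix of the infinite word `w^∞` -/
def PrefixOfPow (u w : List α) : Prop := ∃ n : ℕ, u <+: wpow w n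

/-- the palindromic length of a word -/
noncomputable def PL (u : List α) : ℕ :=
  sInf {k | ∃ ps : List (List α), ps.length = k ∧ (∀ p ∈ ps, p ≠ [] ∧ IsPal p) ∧
    ps.flatten = u}

/-- `u` is a (finite) factor of the infinite word `x` -/
def FactorOfInf (u : List α) (x : ℕ → α) : Prop :=
  ∃ i : ℕ, u = (List.range u.length).map fun j => x (i + j)

/-- `u` is a prefix of the infinite word `x` -/
def PrefixOfInf (u : List α) (x : ℕ → α) : Prop :=
  u = (List.range u.length).map fun j => x j

/-- `x = u v v v ⋯` for some finite words `u, v` with `v` nonempty -/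
def UltimatelyPeriodic (x : ℕ → α) : Prop :=
  ∃ u v : List α, v ≠ [] ∧ (∀ i : ℕ, i < u.length → u[i]? = some (x i)) ∧
    ∀ i : ℕ, v[i % v.length]? = some (x (u.length + i))

/-- padding of an infinite word over `Σ₀ = α`; the padding letter `b` is `none`,
the letters of `Σ₀` are embedded via `some`.  (0-indexed: even positions carry `b`.) -/
def padInf (x : ℕ → α) : ℕ → Option α :=
  fun i => if i % 2 = 0 then none else some (x (i / 2))

/-- padding of a finite word: `pad(u₁u₂⋯uₙ) = u₁ b u₂ b ⋯ b uₙ` -/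
def padF (u : List α) : List (Option α) := List.intersperse none (u.map some)

/-- the padded palindromic length: minimal `k` with `w = p₁ b p₂ b ⋯ b p_k`,
each `pᵢ` a nonempty palindrome -/
noncomputable def PPL (w : List (Option α)) : ℕ :=
  sInf {k | ∃ ps : List (List (Option α)), ps.length = k ∧
    (∀ p ∈ ps, p ≠ [] ∧ IsPal p) ∧ (List.intersperse [none] ps).flatten = w}

/-- the set of nonempty non-periodic palindromic prefixes of `t` -/
def NPP (t : List α) : Set (List α) :=
  {p | p ≠ [] ∧ p <+: t ∧ IsPal p ∧ wOrder p < 2}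

/-- the set of nonempty non-periodic palindromic prefixes of an infinite word -/
def NPPInf (x : ℕ → α) : Set (List α) :=
  {p | p ≠ [] ∧ PrefixOfInf p x ∧ IsPal p ∧ wOrder p < 2}

/-- a word is ordinary if no factor has more nonempty non-periodic palindromic prefixes -/
def Ordinary (t : List α) : Prop := ∀ u : List α, u <:+: t → (NPP u).ncard ≤ (NPP t).ncard

/-- `seg z i j = z[i,j]` (1-indexed, inclusive) -/
def seg (z : List α) (i j : ℕ) : List α := (z.drop (i - 1)).take (j - i + 1)

/-- `Spread(D, ξ)` restricted to ℕ -/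
def Spread (D : Set ℕ) (ξ : ℕ) : Set ℕ :=
  {n | ∃ i ∈ D, ∃ a : ℤ, (n : ℤ) = (i : ℤ) + a * (ξ : ℤ)}

/-- `Close(D) = [min D, max D]` for nonempty `D`, `∅` otherwise -/
def Close (D : Set ℕ) : Set ℕ := {n | D.Nonempty ∧ sInf D ≤ n ∧ n ≤ sSup D}

open Classical in
/-- the diameter of a set -/
noncomputable def diam (D : Set ℕ) : ℕ :=
  if D.Nonempty then sSup D - sInf D + 1 else 0

/-- `D'` is a ξ-cut of `D` -/
def IsCut (D : Set ℕ) (ξ : ℕ) (D' : Set ℕ) : Prop :=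
  D' ⊆ D ∧ (D' = ∅ ∨ diam D' ≤ ξ)

variable (z : List α)

/-- `h = |NPP(z)|` -/
noncomputable def hNPP : ℕ := (NPP z).ncard

/-- `θ(m) = (100h)^m` -/
noncomputable def theta (m : ℕ) : ℕ := (100 * hNPP z) ^ m

/-- the ambient set `W` of candidate nested periodic structures -/
def NPSW : Set (Set ℕ × ℕ) :=
  {Dξ | Dξ.1.Nonempty ∧ Dξ.1 ⊆ Set.Icc 1 z.length ∧
    Dξ.1 = Spread Dξ.1 Dξ.2 ∩ Close Dξ.1 ∧
    IsPeriod (seg z (sInf Dξ.1) (sSup Dξ.1)) Dξ.2}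

/-- nested periodic structures of degree `m` -/
def NestPer : ℕ → Set (Set ℕ × ℕ)
  | 0 => {Dξ ∈ NPSW z | Dξ.1.ncard = 1}
  | m + 1 => {Dξ ∈ NPSW z | ∀ D' : Set ℕ, IsCut Dξ.1 Dξ.2 D' →
      ∃ M : Set (Set ℕ × ℕ), M ⊆ NestPer m ∧ M.Finite ∧ M.ncard ≤ theta z (m + 1) ∧
        D' ⊆ (⋃ C ∈ M, C.1) ∧ (⋃ C ∈ M, C.1) ⊆ Close D'}

/-- `ω(m, D)`: the minimal cardinality of an NPS cover of `D` of degree `m` -/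
noncomputable def omegaMin (m : ℕ) (D : Set ℕ) : ℕ :=
  sInf {k | ∃ M : Set (Set ℕ × ℕ), M ⊆ NestPer z m ∧ M.Finite ∧ M.ncard = k ∧
    D ⊆ (⋃ C ∈ M, C.1) ∧ (⋃ C ∈ M, C.1) ⊆ Close D}

/-- `FirmPalPrefix(n)` -/
def FirmPalPrefix (n : ℕ) : Set (List α) :=
  {p₀ ∈ NPP (z.drop (n - 1)) | ∀ p₁ p₂ : List α, PalCouple p₁ p₂ → p₁ ++ p₂ ++ p₁ = p₀ →
    ¬ (wpow (p₁ ++ p₂) 2 ++ p₁ <+: z.drop (n - 1))}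

/-- `Γ(n)` -/
def Gamma (n : ℕ) : Set (List α × List α) :=
  {pq | PalCouple pq.1 pq.2 ∧ pq.1 ++ pq.2 ++ pq.1 <+: z.drop (n - 1) ∧
    (pq.1 ++ pq.2 ++ pq.1 ∈ FirmPalPrefix z n → pq.1 = [])}

/-- palindromic extension tuples `(n, p₁, p₂, α)` of the position `n` -/
def PalExt (n : ℕ) : Set (ℕ × List α × List α × ℕ) :=
  {T | T.1 = n ∧ PalCouple T.2.1 T.2.2.1 ∧ 1 ≤ T.2.2.2 ∧
    ((wpow (T.2.1 ++ T.2.2.1) T.2.2.2 ++ T.2.1 <+: z.drop (n - 1) ∧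
        T.2.1 ++ T.2.2.1 ++ T.2.1 ∉ FirmPalPrefix z n) ∨
      (T.2.1 = [] ∧ T.2.2.2 = 1 ∧ T.2.2.1 ∈ FirmPalPrefix z n))}

/-- palindromic extension tuples of a set of positions -/
def PalExtSet (D : Set ℕ) : Set (ℕ × List α × List α × ℕ) := ⋃ n ∈ D, PalExt z n

/-- `σ(n, p₁, p₂, α) = n − 1 + |(p₁p₂)^α p₁|` -/
def sigmaPE (T : ℕ × List α × List α × ℕ) : ℕ :=
  T.1 - 1 + (wpow (T.2.1 ++ T.2.2.1) T.2.2.2 ++ T.2.1).length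

/-- covering palindromes of the position `n` -/
def CovPalAll (n : ℕ) : Set (ℕ × ℕ) :=
  {q | 1 ≤ q.1 ∧ q.1 ≤ n ∧ n ≤ q.2 ∧ q.2 ≤ z.length ∧ IsPal (seg z q.1 q.2)}

def CovPalAllLeft (n : ℕ) : Set (ℕ × ℕ) :=
  {q ∈ CovPalAll z n | 2 * n ≤ q.1 + q.2}

/-- edge covering palindromes of the position `n` -/
def CovPalEdge (n : ℕ) : Set (ℕ × ℕ) :=
  {q ∈ CovPalAll z n | 1 < q.1 → q.2 < z.length → ¬ IsPal (seg z (q.1 - 1) (q.2 + 1))}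

def CovPalEdgeLeft (n : ℕ) : Set (ℕ × ℕ) := CovPalAllLeft z n ∩ CovPalEdge z n

/-- `Mirror(n₁, n₂, j) = n₁ + n₂ − j` -/
def Mirror (n₁ n₂ j : ℕ) : ℕ := n₁ + n₂ - j

/-- the characterization of `toPalCouple(n₁, n₂) = (p₁, p₂)` -/
def IsToPalCouple (n₁ n₂ : ℕ) (p₁ p₂ : List α) : Prop :=
  PalCouple p₁ p₂ ∧
  ((seg z n₁ n₂ ∈ FirmPalPrefix z n₁ ∧ p₁ = [] ∧ p₂ = seg z n₁ n₂) ∨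
    (seg z n₁ n₂ ∉ FirmPalPrefix z n₁ ∧ wpow (p₁ ++ p₂) 2 ++ p₁ <+: z.drop (n₁ - 1) ∧
      ∃ a : ℕ, 1 ≤ a ∧ seg z n₁ n₂ = wpow (p₁ ++ p₂) a ++ p₁))

/-- compound covering palindromes of `n` -/
def CovPalCmd (n : ℕ) : Set (ℕ × ℕ) :=
  {q ∈ CovPalEdgeLeft z n | ∀ p₁ p₂ : List α, IsToPalCouple z n (Mirror q.1 q.2 n) p₁ p₂ →
    ¬ FactorOfPow (seg z q.1 q.2) (p₁ ++ p₂)}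

/-- `(ν₁, ν₂, ξ)` is a run of `z` -/
def IsRun (ν₁ ν₂ ξ : ℕ) : Prop :=
  1 ≤ ν₁ ∧ ν₁ ≤ ν₂ ∧ ν₂ ≤ z.length ∧ IsPeriod (seg z ν₁ ν₂) ξ ∧
  ξ ≤ ν₂ - ν₁ + 1 ∧
  (ν₂ < z.length → ¬ IsPeriod (seg z ν₁ (ν₂ + 1)) ξ) ∧
  (1 < ν₁ → ¬ IsPeriod (seg z (ν₁ - 1) ν₂) ξ) ∧
  ∃ p₁ p₂ : List α, PalCouple p₁ p₂ ∧ (p₁ ++ p₂).length = ξ ∧ p₁ ++ p₂ <+: seg z ν₁ ν₂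

/-- the characterization of `pToRun(n₁, n₂) = r` -/
def IsPToRun (n₁ n₂ : ℕ) (r : ℕ × ℕ × ℕ) : Prop :=
  IsRun z r.1 r.2.1 r.2.2 ∧ r.1 ≤ n₁ ∧ n₂ ≤ r.2.1 ∧
  ∃ p₁ p₂ : List α, IsToPalCouple z n₁ n₂ p₁ p₂ ∧ r.2.2 = (p₁ ++ p₂).length

/-- `pToRun(X)` as a set of runs -/
def pToRunImage (X : Set (ℕ × ℕ)) : Set (ℕ × ℕ × ℕ) :=
  {r | ∃ q ∈ X, IsPToRun z q.1 q.2 r}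

/-- the collection `UC` -/
def UC : Set (Set ℕ) :=
  {S | S ⊆ Set.Icc 1 z.length ∧ ∀ μ₁ μ₂ ξ : ℕ, 1 ≤ μ₁ → μ₁ ≤ μ₂ → μ₂ ≤ z.length →
    IsPeriod (seg z μ₁ μ₂) ξ →
    ∃ E : Set ℕ, E ⊆ Set.Icc μ₁ μ₂ ∧ E.Finite ∧ E.ncard ≤ 8 ∧
      S ∩ (⋃ δ ∈ E, Set.Icc δ (δ + ξ - 1)) = S ∩ Set.Icc μ₁ μ₂}

end PalLen

namespace PalLen

variable {α : Type*}

/-- the sets `B_j` of base positions, built from the chain `zs 1, …, zs h` of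
non-periodic palindromic prefixes and the middle palindromes `zh i` -/
def BaseB (zs zh : ℕ → List α) : ℕ → Set (ℕ × ℕ)
  | 0 => ∅
  | 1 => {(1, 1)}
  | j + 2 => BaseB zs zh (j + 1) ∪
      ((fun q : ℕ × ℕ => (q.1, q.2 + (zs (j + 1)).length + (zh (j + 1)).length)) ''
        BaseB zs zh (j + 1)) ∪
      {(j + 2, 1)}

end PalLen

namespace PalLen

variable {α : Type*}

lemma seg_length' (z : List α) (b c : ℕ) :
    (seg z b c).length = min (c - b + 1) (z.length - (b - 1)) := by
  simp [seg]

lemma seg_getElem' (z : List α) (b c k : ℕ) :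
    (seg z b c)[k]? = if k < c - b + 1 then z[(b-1)+k]? else none := by
  simp [seg, List.getElem?_take, List.getElem?_drop]

lemma isPeriod_seg_mono {z : List α} {b c b' c' ξ : ℕ} (h : IsPeriod (seg z b c) ξ)
    (h1 : 1 ≤ b) (h2 : b ≤ b') (h3 : b' ≤ c') (h4 : c' ≤ c) (h5 : c ≤ z.length) :
    IsPeriod (seg z b' c') ξ := by
  refine ⟨h.1, fun i hi => ?_⟩
  rw [seg_length'] at hi
  have hi' : i + ξ < c' - b' + 1 := lt_of_lt_of_le hi (min_le_left _ _)
  have key := h.2 ((b' - b) + i) (by rw [seg_length']; omega)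
  rw [seg_getElem', seg_getElem', if_pos (by omega), if_pos (by omega)] at key
  rw [seg_getElem', seg_getElem', if_pos (by omega), if_pos hi']
  have e1 : (b-1) + ((b'-b) + i) = (b'-1) + i := by omega
  have e2 : (b-1) + ((b'-b) + i + ξ) = (b'-1) + (i + ξ) := by omega
  rw [e1, e2] at key
  exact key

lemma period_step {z : List α} {μ₃ μ₄ ξ₂ : ℕ} (h : IsPeriod (seg z μ₃ μ₄) ξ₂)
    (hμ₁ : 1 ≤ μ₃) (hμ₄ : μ₄ ≤ z.length) {x : ℕ} (h1 : μ₃ - 1 ≤ x)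
    (h2 : x + ξ₂ + 1 ≤ μ₄) : z[x]? = z[x + ξ₂]? := by
  have key := h.2 (x - (μ₃ - 1)) (by rw [seg_length']; omega)
  rw [seg_getElem', seg_getElem', if_pos (by omega), if_pos (by omega)] at key
  have e1 : (μ₃-1) + (x - (μ₃-1)) = x := by omega
  have e2 : (μ₃-1) + (x - (μ₃-1) + ξ₂) = x + ξ₂ := by omega
  rw [e1, e2] at key
  exact key

lemma period_iter {z : List α} {μ₃ μ₄ ξ₂ : ℕ} (h : IsPeriod (seg z μ₃ μ₄) ξ₂)
    (hμ₁ : 1 ≤ μ₃) (hμ₄ : μ₄ ≤ z.length) (j : ℕ) : ∀ {x : ℕ}, μ₃ - 1 ≤ x →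
    x + j * ξ₂ + 1 ≤ μ₄ → z[x]? = z[x + j * ξ₂]? := by
  induction j with
  | zero => simp
  | succ j ih =>
    intro x h1 h2
    have hξ := h.1
    have step : z[x]? = z[x + ξ₂]? := period_step h hμ₁ hμ₄ h1 (by nlinarith)
    rw [step, ih (by omega) (by rw [show x + ξ₂ + j * ξ₂ = x + (j+1) * ξ₂ by ring]; omega)]
    ring_nf

lemma seg_shift {z : List α} {μ₃ μ₄ ξ₂ : ℕ} (h : IsPeriod (seg z μ₃ μ₄) ξ₂)
    (hμ₁ : 1 ≤ μ₃) (hμ₄ : μ₄ ≤ z.length) {j b c : ℕ} (hb : μ₃ + j * ξ₂ ≤ b)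
    (hbc : b ≤ c) (hc : c ≤ μ₄) :
    seg z (b - j * ξ₂) (c - j * ξ₂) = seg z b c := by
  apply List.ext_getElem?
  intro k
  rw [seg_getElem', seg_getElem']
  have e : c - j * ξ₂ - (b - j * ξ₂) + 1 = c - b + 1 := by omega
  rw [e]
  by_cases hk : k < c - b + 1
  · rw [if_pos hk, if_pos hk]
    have := period_iter h hμ₁ hμ₄ j (x := (b - j*ξ₂ - 1) + k) (by omega) (by omega)
    rw [this]
    congr 1
    omega
  · rw [if_neg hk, if_neg hk]

lemma sInf_image_sub (C : Set ℕ) (t : ℕ) (hC : C.Nonempty) :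
    sInf ((· - t) '' C) = sInf C - t := by
  apply le_antisymm
  · exact Nat.sInf_le ⟨sInf C, Nat.sInf_mem hC, rfl⟩
  · exact le_csInf (hC.image _)
      (by rintro x ⟨n, hn, rfl⟩; exact Nat.sub_le_sub_right (Nat.sInf_le hn) t)

lemma sSup_image_sub (C : Set ℕ) (t : ℕ) (hC : C.Nonempty) (hb : BddAbove C) :
    sSup ((· - t) '' C) = sSup C - t := by
  apply le_antisymm
  · exact csSup_le (hC.image _)
      (by rintro x ⟨n, hn, rfl⟩; exact Nat.sub_le_sub_right (le_csSup hb hn) t)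
  · refine le_csSup ⟨sSup C - t, ?_⟩ ⟨sSup C, Nat.sSup_mem hC hb, rfl⟩
    rintro x ⟨n, hn, rfl⟩
    exact Nat.sub_le_sub_right (le_csSup hb hn) t

lemma sInf_image_add (C : Set ℕ) (t : ℕ) (hC : C.Nonempty) :
    sInf ((· + t) '' C) = sInf C + t := by
  apply le_antisymm
  · exact Nat.sInf_le ⟨sInf C, Nat.sInf_mem hC, rfl⟩
  · exact le_csInf (hC.image _)
      (by rintro x ⟨n, hn, rfl⟩; exact Nat.add_le_add_right (Nat.sInf_le hn) t)

lemma sSup_image_add (C : Set ℕ) (t : ℕ) (hC : C.Nonempty) (hb : BddAbove C) :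
    sSup ((· + t) '' C) = sSup C + t := by
  apply le_antisymm
  · exact csSup_le (hC.image _)
      (by rintro x ⟨n, hn, rfl⟩; exact Nat.add_le_add_right (le_csSup hb hn) t)
  · refine le_csSup ⟨sSup C + t, ?_⟩ ⟨sSup C, Nat.sSup_mem hC hb, rfl⟩
    rintro x ⟨n, hn, rfl⟩
    exact Nat.add_le_add_right (le_csSup hb hn) t

lemma nestPer_mem_NPSW {z : List α} {m : ℕ} {Dξ : Set ℕ × ℕ}
    (h : Dξ ∈ NestPer z m) : Dξ ∈ NPSW z := by
  cases m <;> exact h.1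

lemma npsw_shift (z : List α) {μ₃ μ₄ ξ₂ : ℕ} (hμ₁ : 1 ≤ μ₃) (hμ₄ : μ₄ ≤ z.length)
    (hper : IsPeriod (seg z μ₃ μ₄) ξ₂) (j : ℕ) {C : Set ℕ} {ξ' : ℕ}
    (hC : (C, ξ') ∈ NPSW z) (hsub : C ⊆ Set.Icc (μ₃ + j * ξ₂) μ₄) :
    ((· - j * ξ₂) '' C, ξ') ∈ NPSW z := by
  obtain ⟨hne, hicc, hspread, hperC⟩ := hC
  simp only at hne hicc hspread hperC
  set t := j * ξ₂ with ht
  have hCb : BddAbove C := ⟨μ₄, fun n hn => (hsub hn).2⟩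
  have hInfC : sInf C ∈ C := Nat.sInf_mem hne
  have hSupC : sSup C ∈ C := Nat.sSup_mem hne hCb
  have hInflo : μ₃ + t ≤ sInf C := (hsub hInfC).1
  have hSuphi : sSup C ≤ μ₄ := (hsub hSupC).2
  have hInfSup : sInf C ≤ sSup C := Nat.sInf_le hSupC
  have hInf' : sInf ((· - t) '' C) = sInf C - t := sInf_image_sub C t hne
  have hSup' : sSup ((· - t) '' C) = sSup C - t := sSup_image_sub C t hne hCb
  refine ⟨hne.image _, ?_, ?_, ?_⟩
  · rintro x ⟨n, hn, rfl⟩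
    have h1 := (hsub hn).1
    have h2 := (hsub hn).2
    show n - t ∈ Set.Icc 1 z.length
    rw [Set.mem_Icc]
    omega
  · apply Set.Subset.antisymm
    · rintro x ⟨n, hn, rfl⟩
      refine ⟨⟨n - t, ⟨n, hn, rfl⟩, 0, by simp⟩, hne.image _, ?_, ?_⟩
      · rw [hInf']; exact Nat.sub_le_sub_right (Nat.sInf_le hn) t
      · rw [hSup']; exact Nat.sub_le_sub_right (le_csSup hCb hn) t
    · rintro x ⟨⟨i', ⟨i, hi, rfl⟩, a, hx⟩, -, hxlo, hxhi⟩
      rw [hInf'] at hxlo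
      rw [hSup'] at hxhi
      have hit : μ₃ + t ≤ i := (hsub hi).1
      have hmem : x + t ∈ C := by
        rw [hspread]
        refine ⟨⟨i, hi, a, ?_⟩, hne, by omega, by omega⟩
        have hcast : ((i - t : ℕ) : ℤ) = (i : ℤ) - t := by
          rw [Nat.cast_sub (by omega)]
        rw [hcast] at hx
        push_cast
        linarith
      exact ⟨x + t, hmem, by show x + t - t = x; omega⟩
  · simp only [hInf', hSup']
    rw [seg_shift hper hμ₁ hμ₄ hInflo hInfSup hSuphi]
    exact hperC

lemma nestper_shift (z : List α) {μ₃ μ₄ ξ₂ : ℕ} (hμ₁ : 1 ≤ μ₃) (hμ₄ : μ₄ ≤ z.length)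
    (hper : IsPeriod (seg z μ₃ μ₄) ξ₂) (j : ℕ) :
    ∀ m : ℕ, ∀ C : Set ℕ, ∀ ξ' : ℕ, (C, ξ') ∈ NestPer z m →
      C ⊆ Set.Icc (μ₃ + j * ξ₂) μ₄ → ((· - j * ξ₂) '' C, ξ') ∈ NestPer z m := by
  intro m
  induction m with
  | zero =>
    intro C ξ' hC hsub
    obtain ⟨x, hx⟩ := Set.ncard_eq_one.mp hC.2
    subst hx
    refine ⟨npsw_shift z hμ₁ hμ₄ hper j hC.1 hsub, ?_⟩
    show ((fun n => n - j * ξ₂) '' {x}).ncard = 1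
    rw [Set.image_singleton]
    exact Set.ncard_singleton _
  | succ m ih =>
    intro C ξ' hC hsub
    obtain ⟨hW, hcut⟩ := hC
    refine ⟨npsw_shift z hμ₁ hμ₄ hper j hW hsub, ?_⟩
    intro D'' hD''
    set t := j * ξ₂ with ht
    rcases eq_or_ne D'' ∅ with rfl | hne''
    · exact ⟨∅, by simp, by simp, by simp, by simp, by simp⟩
    · have hne2 : D''.Nonempty := Set.nonempty_iff_ne_empty.mpr hne''
      obtain ⟨hsubC', hdiam⟩ := hD''
      have hCne : C.Nonempty := hW.1
      have hCb : BddAbove C := ⟨μ₄, fun n hn => (hsub hn).2⟩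
      have hD''mem : ∀ d ∈ D'', μ₃ ≤ d ∧ d + t ∈ C := by
        intro d hd
        obtain ⟨n, hn, rfl⟩ := hsubC' hd
        have h1 := (hsub hn).1
        show μ₃ ≤ n - t ∧ n - t + t ∈ C
        have he : n - t + t = n := by omega
        rw [he]
        exact ⟨by omega, hn⟩
      have hD''b : BddAbove D'' := ⟨μ₄, fun d hd =>
        le_trans (by omega) ((hsub (hD''mem d hd).2).2)⟩
      have hEsub : (· + t) '' D'' ⊆ C := by
        rintro x ⟨d, hd, rfl⟩
        exact (hD''mem d hd).2
      have hInfE : sInf ((· + t) '' D'') = sInf D'' + t := sInf_image_add _ _ hne2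
      have hSupE : sSup ((· + t) '' D'') = sSup D'' + t := sSup_image_add _ _ hne2 hD''b
      have hdiam' : diam D'' ≤ ξ' := by
        rcases hdiam with h | h
        · exact absurd h hne''
        · exact h
      have hcutE : IsCut C ξ' ((· + t) '' D'') := by
        refine ⟨hEsub, Or.inr ?_⟩
        have h1 : diam ((· + t) '' D'') = sSup D'' + t - (sInf D'' + t) + 1 := by
          rw [diam, if_pos (hne2.image _), hInfE, hSupE]
        have h2 : diam D'' = sSup D'' - sInf D'' + 1 := by
          rw [diam, if_pos hne2]
        omega
      obtain ⟨M, hM1, hM2, hM3, hM4, hM5⟩ := hcut _ hcutE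
      have hInfD'' : sInf D'' ∈ D'' := Nat.sInf_mem hne2
      have hSupD'' : sSup D'' ∈ D'' := Nat.sSup_mem hne2 hD''b
      have hMicc : ∀ p ∈ M, p.1 ⊆ Set.Icc (μ₃ + t) μ₄ := by
        intro p hp x hx
        have hxU : x ∈ ⋃ C ∈ M, C.1 := Set.mem_biUnion hp hx
        obtain ⟨-, hxlo, hxhi⟩ := hM5 hxU
        rw [hInfE] at hxlo
        rw [hSupE] at hxhi
        have hlo := (hD''mem _ hInfD'').1
        have hhi := (hsub (hD''mem _ hSupD'').2).2
        exact ⟨by omega, by omega⟩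
      refine ⟨(fun p => ((· - t) '' p.1, p.2)) '' M, ?_, hM2.image _, ?_, ?_, ?_⟩
      · rintro p ⟨⟨E₁, ξ₁⟩, hmem, rfl⟩
        exact ih E₁ ξ₁ (hM1 hmem) (hMicc _ hmem)
      · exact le_trans (Set.ncard_image_le hM2) hM3
      · intro d hd
        have hdt : d + t ∈ ⋃ C ∈ M, C.1 := hM4 ⟨d, hd, rfl⟩
        obtain ⟨p, hp, hdp⟩ := Set.mem_iUnion₂.mp hdt
        exact Set.mem_biUnion (Set.mem_image_of_mem _ hp)
          ⟨d + t, hdp, by show d + t - t = d; omega⟩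
      · intro x hx
        obtain ⟨p, hp, hxp⟩ := Set.mem_iUnion₂.mp hx
        obtain ⟨q, hq, rfl⟩ := hp
        obtain ⟨n, hn, rfl⟩ := hxp
        have hnU : n ∈ ⋃ C ∈ M, C.1 := Set.mem_biUnion hq hn
        obtain ⟨-, hxlo, hxhi⟩ := hM5 hnU
        rw [hInfE] at hxlo
        rw [hSupE] at hxhi
        exact ⟨hne2, by show sInf D'' ≤ n - t; omega, by show n - t ≤ sSup D''; omega⟩

lemma nestper_inter (z : List α) (m : ℕ) {D : Set ℕ} {ξ : ℕ}
    (hD : (D, ξ) ∈ NestPer z (m+1)) (lo hi : ℕ)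
    (hne : (D ∩ Set.Icc lo hi).Nonempty) :
    (D ∩ Set.Icc lo hi, ξ) ∈ NestPer z (m+1) := by
  obtain ⟨⟨hDne, hicc, hspread, hperD⟩, hcut⟩ := hD
  simp only at hDne hicc hspread hperD
  have hsub : D ∩ Set.Icc lo hi ⊆ D := Set.inter_subset_left
  have hDb : BddAbove D := ⟨z.length, fun n hn => (hicc hn).2⟩
  have hD'b : BddAbove (D ∩ Set.Icc lo hi) := hDb.mono hsub
  have hInf' : sInf (D ∩ Set.Icc lo hi) ∈ D ∩ Set.Icc lo hi := Nat.sInf_mem hne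
  have hSup' : sSup (D ∩ Set.Icc lo hi) ∈ D ∩ Set.Icc lo hi := Nat.sSup_mem hne hD'b
  have hIS : sInf (D ∩ Set.Icc lo hi) ≤ sSup (D ∩ Set.Icc lo hi) := Nat.sInf_le hSup'
  refine ⟨⟨hne, fun n hn => hicc (hsub hn), ?_, ?_⟩, ?_⟩
  · apply Set.Subset.antisymm
    · intro n hn
      exact ⟨⟨n, hn, 0, by simp⟩, hne, Nat.sInf_le hn, le_csSup hD'b hn⟩
    · rintro x ⟨⟨i, hi, a, hx⟩, -, hxlo, hxhi⟩
      have hxD : x ∈ D := by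
        rw [hspread]
        refine ⟨⟨i, hsub hi, a, hx⟩, hDne, ?_, ?_⟩
        · exact le_trans (Nat.sInf_le (hsub hInf')) hxlo
        · exact le_trans hxhi (le_csSup hDb (hsub hSup'))
      exact ⟨hxD, le_trans hInf'.2.1 hxlo, le_trans hxhi hSup'.2.2⟩
  · refine isPeriod_seg_mono hperD ?_ ?_ hIS ?_ ?_
    · exact (hicc (Nat.sInf_mem hDne)).1
    · exact Nat.sInf_le (hsub hInf')
    · exact le_csSup hDb (hsub hSup')
    · exact (hicc (Nat.sSup_mem hDne hDb)).2
  · intro D'' hD''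
    exact hcut D'' ⟨hD''.1.trans hsub, hD''.2⟩

end PalLen

/-- If `m ≥ 1`, `(D, ξ) ∈ NestPer(m)`, `D ⊆ [μ₃, μ₄] ⊆ [1, |z|]`, `ξ₂` is a
period of `z[μ₃, μ₄]` and `μ₄ − μ₃ + 1 ≤ α ξ₂`, then there is
`G ⊆ [μ₃, μ₃ + ξ₂ − 1]` with `ω(m, G) ≤ α` and `D ⊆ Spread(G, ξ₂)`. -/
theorem statement12 {α : Type*} (z : List α) (hz : z ≠ []) (m : ℕ) (hm : 1 ≤ m)
    (D : Set ℕ) (ξ : ℕ) (hD : (D, ξ) ∈ PalLen.NestPer z m)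
    (μ₃ μ₄ : ℕ) (hμ₁ : 1 ≤ μ₃) (hμ₂ : μ₃ ≤ μ₄) (hμ₃ : μ₄ ≤ z.length)
    (hDsub : D ⊆ Set.Icc μ₃ μ₄) (ξ₂ : ℕ) (hper : PalLen.IsPeriod (PalLen.seg z μ₃ μ₄) ξ₂)
    (a : ℕ) (ha : 1 ≤ a) (hlen : μ₄ - μ₃ + 1 ≤ a * ξ₂) :
    ∃ G : Set ℕ, G ⊆ Set.Icc μ₃ (μ₃ + ξ₂ - 1) ∧ PalLen.omegaMin z m G ≤ a ∧
      D ⊆ PalLen.Spread G ξ₂ := by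
  classical
  obtain ⟨m', rfl⟩ : ∃ m', m = m' + 1 := ⟨m - 1, by omega⟩
  have hξ₂pos : 0 < ξ₂ := hper.1
  have hNW : ((D, ξ) : Set ℕ × ℕ) ∈ PalLen.NPSW z := PalLen.nestPer_mem_NPSW hD
  have hDne : D.Nonempty := hNW.1
  have hGicc : (fun n => μ₃ + (n - μ₃) % ξ₂) '' D ⊆ Set.Icc μ₃ (μ₃ + ξ₂ - 1) := by
    rintro x ⟨n, hn, rfl⟩
    have hmod : (n - μ₃) % ξ₂ < ξ₂ := Nat.mod_lt _ hξ₂pos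
    show μ₃ + (n - μ₃) % ξ₂ ∈ Set.Icc μ₃ (μ₃ + ξ₂ - 1)
    rw [Set.mem_Icc]
    omega
  refine ⟨(fun n => μ₃ + (n - μ₃) % ξ₂) '' D, hGicc, ?_, ?_⟩
  · -- omegaMin bound
    have hSfin : Set.Finite {j : ℕ | j < a ∧
        (D ∩ Set.Icc (μ₃ + j * ξ₂) (μ₃ + j * ξ₂ + ξ₂ - 1)).Nonempty} :=
      (Set.finite_Iio a).subset (fun j hj => hj.1)
    set M : Set (Set ℕ × ℕ) := (fun j => ((fun n => n - j * ξ₂) ''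
        (D ∩ Set.Icc (μ₃ + j * ξ₂) (μ₃ + j * ξ₂ + ξ₂ - 1)), ξ)) ''
        {j : ℕ | j < a ∧ (D ∩ Set.Icc (μ₃ + j * ξ₂) (μ₃ + j * ξ₂ + ξ₂ - 1)).Nonempty}
      with hM
    have hMsub : M ⊆ PalLen.NestPer z (m' + 1) := by
      rintro p ⟨j, hj, rfl⟩
      exact PalLen.nestper_shift z hμ₁ hμ₃ hper j (m' + 1) _ ξ
        (PalLen.nestper_inter z m' hD _ _ hj.2)
        (fun n hn => Set.mem_Icc.mpr ⟨hn.2.1, (hDsub hn.1).2⟩)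
    have hMfin : M.Finite := hSfin.image _
    have hcard : M.ncard ≤ a := by
      refine le_trans (Set.ncard_image_le hSfin) (le_trans
        (Set.ncard_le_ncard (show {j : ℕ | j < a ∧
          (D ∩ Set.Icc (μ₃ + j * ξ₂) (μ₃ + j * ξ₂ + ξ₂ - 1)).Nonempty} ⊆ Set.Iio a from
          fun j hj => hj.1) (Set.finite_Iio a)) ?_)
      rw [Set.ncard_eq_toFinset_card']
      simp
    have hUG : (⋃ C ∈ M, C.1) = (fun n => μ₃ + (n - μ₃) % ξ₂) '' D := by
      apply Set.Subset.antisymm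
      · intro x hx
        obtain ⟨p, hp, hxp⟩ := Set.mem_iUnion₂.mp hx
        obtain ⟨j, hj, rfl⟩ := hp
        obtain ⟨n, ⟨hnD, hnW⟩, rfl⟩ := hxp
        refine ⟨n, hnD, ?_⟩
        have h1 : μ₃ + j * ξ₂ ≤ n := hnW.1
        have h2 : n ≤ μ₃ + j * ξ₂ + ξ₂ - 1 := hnW.2
        have hmodeq : (n - μ₃) % ξ₂ = n - μ₃ - j * ξ₂ := by
          have hcm : ξ₂ * j = j * ξ₂ := mul_comm _ _
          have he : n - μ₃ = ξ₂ * j + (n - μ₃ - j * ξ₂) := by omega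
          have hlt : n - μ₃ - j * ξ₂ < ξ₂ := by omega
          have he2 : (n - μ₃) % ξ₂ = (ξ₂ * j + (n - μ₃ - j * ξ₂)) % ξ₂ := by rw [← he]
          rw [he2, Nat.mul_add_mod]
          exact Nat.mod_eq_of_lt hlt
        show μ₃ + (n - μ₃) % ξ₂ = n - j * ξ₂
        rw [hmodeq]
        omega
      · rintro x ⟨n, hnD, rfl⟩
        have h1 : μ₃ ≤ n := (hDsub hnD).1
        have h2 : n ≤ μ₄ := (hDsub hnD).2
        have hdm : (n - μ₃) / ξ₂ * ξ₂ + (n - μ₃) % ξ₂ = n - μ₃ := Nat.div_add_mod' _ _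
        have hmod : (n - μ₃) % ξ₂ < ξ₂ := Nat.mod_lt _ hξ₂pos
        have hjq : (n - μ₃) / ξ₂ < a := by
          rw [Nat.div_lt_iff_lt_mul hξ₂pos]
          omega
        have hnW : n ∈ Set.Icc (μ₃ + (n - μ₃) / ξ₂ * ξ₂)
            (μ₃ + (n - μ₃) / ξ₂ * ξ₂ + ξ₂ - 1) := Set.mem_Icc.mpr ⟨by omega, by omega⟩
        refine Set.mem_iUnion₂.mpr ⟨_, ⟨(n - μ₃) / ξ₂, ⟨hjq, ⟨n, hnD, hnW⟩⟩, rfl⟩,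
          ⟨n, ⟨hnD, hnW⟩, ?_⟩⟩
        show n - (n - μ₃) / ξ₂ * ξ₂ = μ₃ + (n - μ₃) % ξ₂
        omega
    have hGne : ((fun n => μ₃ + (n - μ₃) % ξ₂) '' D).Nonempty := hDne.image _
    have hclose : (⋃ C ∈ M, C.1) ⊆ PalLen.Close ((fun n => μ₃ + (n - μ₃) % ξ₂) '' D) := by
      rw [hUG]
      intro g hg
      exact ⟨hGne, Nat.sInf_le hg,
        le_csSup ⟨μ₃ + ξ₂ - 1, fun x hx => (Set.mem_Icc.mp (hGicc hx)).2⟩ hg⟩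
    have hmem : M.ncard ∈ {k | ∃ M' : Set (Set ℕ × ℕ), M' ⊆ PalLen.NestPer z (m' + 1) ∧
        M'.Finite ∧ M'.ncard = k ∧
        (fun n => μ₃ + (n - μ₃) % ξ₂) '' D ⊆ (⋃ C ∈ M', C.1) ∧
        (⋃ C ∈ M', C.1) ⊆ PalLen.Close ((fun n => μ₃ + (n - μ₃) % ξ₂) '' D)} :=
      ⟨M, hMsub, hMfin, rfl, le_of_eq hUG.symm, hclose⟩
    exact le_trans (Nat.sInf_le hmem) hcard
  · intro n hn
    have h1 : μ₃ ≤ n := (hDsub hn).1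
    have hdm : (n - μ₃) / ξ₂ * ξ₂ + (n - μ₃) % ξ₂ = n - μ₃ := Nat.div_add_mod' _ _
    refine ⟨μ₃ + (n - μ₃) % ξ₂, ⟨n, hn, rfl⟩, ((n - μ₃) / ξ₂ : ℕ), ?_⟩
    have hcast := congrArg (Nat.cast : ℕ → ℤ) hdm
    push_cast [Nat.cast_sub h1] at hcast
    push_cast [Nat.cast_sub h1]
    omega
end

section
/- For every integer m ≥ 0, every (D, ξ) ∈ NestPer(m), and every S ∈ UC, one has |D ∩ S| ≤ 8^m · (100h)^{m²}. -/
namespace PalLen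

lemma biUnion_ncard_le' {β : Type*} {M : Set β} (hM : M.Finite) (g : β → Set ℕ) {k : ℕ}
    (hg : ∀ x ∈ M, (g x).ncard ≤ k) : (⋃ x ∈ M, g x).ncard ≤ M.ncard * k := by
  refine Set.Finite.induction_on
    (motive := fun M _ => (∀ x ∈ M, (g x).ncard ≤ k) → (⋃ x ∈ M, g x).ncard ≤ M.ncard * k)
    M hM (by simp) ?_ hg
  intro a s ha hs ih hg
  rw [Set.biUnion_insert]
  calc (g a ∪ ⋃ x ∈ s, g x).ncard ≤ (g a).ncard + (⋃ x ∈ s, g x).ncard :=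
        Set.ncard_union_le _ _
    _ ≤ k + s.ncard * k :=
        Nat.add_le_add (hg a (Set.mem_insert _ _))
          (ih fun x hx => hg x (Set.mem_insert_of_mem _ hx))
    _ = (insert a s).ncard * k := by
        rw [Set.ncard_insert_of_notMem ha hs]; ring

lemma one_le_hNPP' {α : Type*} (z : List α) (hz : z ≠ []) : 1 ≤ (NPP z).ncard := by
  obtain ⟨a, t, rfl⟩ := List.exists_cons_of_ne_nil hz
  have hper : IsPeriod [a] 1 := ⟨le_refl 1, fun i hi => by simp at hi⟩
  have hmper : mper [a] = 1 := by
    refine le_antisymm (Nat.sInf_le hper) ?_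
    have := Nat.sInf_mem (⟨1, hper⟩ : {ξ | IsPeriod ([a] : List α) ξ}.Nonempty)
    exact this.1
  have hmem : [a] ∈ NPP (a :: t) := by
    refine ⟨by simp, ⟨t, rfl⟩, by simp [IsPal], ?_⟩
    rw [wOrder, hmper]
    norm_num
  have hfin : (NPP (a :: t)).Finite := by
    refine Set.Finite.subset (List.finite_toSet (a :: t).inits) fun p hp => ?_
    exact (List.mem_inits _ _).2 hp.2.1
  have := (Set.ncard_pos hfin).2 ⟨_, hmem⟩
  omega

lemma nestPer_subset_NPSW {α : Type*} (z : List α) (m : ℕ) :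
    NestPer z m ⊆ NPSW z := by
  cases m with
  | zero => exact fun x hx => hx.1
  | succ m => exact fun x hx => hx.1

end PalLen

/-- For every `m ≥ 0`, every `(D, ξ) ∈ NestPer(m)` and every `S ∈ UC`,
`|D ∩ S| ≤ 8^m · (100h)^{m²}`. -/
theorem statement19 {α : Type*} (z : List α) (hz : z ≠ []) (m : ℕ)
    (D : Set ℕ) (ξ : ℕ) (hD : (D, ξ) ∈ PalLen.NestPer z m)
    (S : Set ℕ) (hS : S ∈ PalLen.UC z) :
    (D ∩ S).ncard ≤ 8 ^ m * (100 * (PalLen.NPP z).ncard) ^ (m ^ 2) := by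
  have h1 : 1 ≤ 100 * (PalLen.NPP z).ncard := by
    have := PalLen.one_le_hNPP' z hz; omega
  induction m generalizing D ξ with
  | zero =>
    obtain ⟨hW, hcard⟩ := hD
    obtain ⟨a, rfl⟩ := Set.ncard_eq_one.mp hcard
    have : (({a} : Set ℕ) ∩ S).ncard ≤ ({a} : Set ℕ).ncard :=
      Set.ncard_le_ncard Set.inter_subset_left (Set.finite_singleton a)
    simpa using this
  | succ m ih =>
    obtain ⟨hW, hcut⟩ := hD
    obtain ⟨hne, hsub, hspread, hper⟩ := hW
    set μ₁ := sInf D with hμ₁def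
    set μ₂ := sSup D with hμ₂def
    have hDfin : D.Finite := (Set.finite_Icc 1 z.length).subset hsub
    have hμ₁D : μ₁ ∈ D := Nat.sInf_mem hne
    have hμ₂D : μ₂ ∈ D := hne.csSup_mem hDfin
    have h1μ : 1 ≤ μ₁ := (hsub hμ₁D).1
    have hμμ : μ₁ ≤ μ₂ := le_csSup hDfin.bddAbove hμ₁D
    have hμ₂z : μ₂ ≤ z.length := (hsub hμ₂D).2
    have hξ1 : 1 ≤ ξ := hper.1
    obtain ⟨E, hEsub, hEfin, hEcard, hEeq⟩ := hS.2 μ₁ μ₂ ξ h1μ hμμ hμ₂z hper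
    have hDIcc : D ⊆ Set.Icc μ₁ μ₂ := fun n hn =>
      ⟨Nat.sInf_le hn, le_csSup hDfin.bddAbove hn⟩
    have key : D ∩ S = ⋃ δ ∈ E, (D ∩ S ∩ Set.Icc δ (δ + ξ - 1)) := by
      ext n
      simp only [Set.mem_inter_iff, Set.mem_iUnion, exists_prop]
      constructor
      · rintro ⟨hnD, hnS⟩
        have hmem : n ∈ S ∩ ⋃ δ ∈ E, Set.Icc δ (δ + ξ - 1) := by
          rw [hEeq]; exact ⟨hnS, hDIcc hnD⟩
        obtain ⟨-, hmem⟩ := hmem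
        simp only [Set.mem_iUnion, exists_prop] at hmem
        obtain ⟨δ, hδE, hδn⟩ := hmem
        exact ⟨δ, hδE, ⟨hnD, hnS⟩, hδn⟩
      · rintro ⟨δ, hδ, ⟨hnD, hnS⟩, -⟩; exact ⟨hnD, hnS⟩
    have piece : ∀ δ ∈ E, (D ∩ S ∩ Set.Icc δ (δ + ξ - 1)).ncard ≤
        PalLen.theta z (m + 1) * (8 ^ m * (100 * (PalLen.NPP z).ncard) ^ (m ^ 2)) := by
      intro δ hδ
      set D' := D ∩ Set.Icc δ (δ + ξ - 1) with hD'def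
      have hD'fin : D'.Finite := hDfin.subset Set.inter_subset_left
      have hcutD' : PalLen.IsCut D ξ D' := by
        refine ⟨Set.inter_subset_left, ?_⟩
        rcases Set.eq_empty_or_nonempty D' with hD'e | hD'ne
        · exact Or.inl hD'e
        · right
          have hInf : sInf D' ∈ D' := Nat.sInf_mem hD'ne
          have hSup : sSup D' ∈ D' := hD'ne.csSup_mem hD'fin
          have h1 := hInf.2
          have h2 := hSup.2
          rw [PalLen.diam, if_pos hD'ne]
          simp only [Set.mem_Icc] at h1 h2
          omega
      obtain ⟨M, hMsub, hMfin, hMcard, hD'cov, -⟩ := hcut D' hcutD'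
      have hsubset : D ∩ S ∩ Set.Icc δ (δ + ξ - 1) ⊆ ⋃ C ∈ M, (C.1 ∩ S) := by
        rintro n ⟨⟨hnD, hnS⟩, hnI⟩
        have : n ∈ ⋃ C ∈ M, C.1 := hD'cov ⟨hnD, hnI⟩
        simp only [Set.mem_iUnion, exists_prop] at this ⊢
        obtain ⟨C, hCM, hnC⟩ := this
        exact ⟨C, hCM, hnC, hnS⟩
      have hfinU : (⋃ C ∈ M, (C.1 ∩ S)).Finite := by
        refine hMfin.biUnion fun C hC => ?_
        have := (PalLen.nestPer_subset_NPSW z m (hMsub hC)).2.1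
        exact ((Set.finite_Icc 1 z.length).subset this).subset Set.inter_subset_left
      calc (D ∩ S ∩ Set.Icc δ (δ + ξ - 1)).ncard
          ≤ (⋃ C ∈ M, (C.1 ∩ S)).ncard := Set.ncard_le_ncard hsubset hfinU
        _ ≤ M.ncard * (8 ^ m * (100 * (PalLen.NPP z).ncard) ^ (m ^ 2)) := by
            refine PalLen.biUnion_ncard_le' hMfin _ fun C hC => ?_
            exact ih C.1 C.2 (by simpa using hMsub hC)
        _ ≤ PalLen.theta z (m + 1) * (8 ^ m * (100 * (PalLen.NPP z).ncard) ^ (m ^ 2)) :=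
            Nat.mul_le_mul_right _ hMcard
    calc (D ∩ S).ncard
        = (⋃ δ ∈ E, (D ∩ S ∩ Set.Icc δ (δ + ξ - 1))).ncard := by conv_lhs => rw [key]
      _ ≤ E.ncard * (PalLen.theta z (m + 1) *
            (8 ^ m * (100 * (PalLen.NPP z).ncard) ^ (m ^ 2))) :=
          PalLen.biUnion_ncard_le' hEfin _ piece
      _ ≤ 8 * (PalLen.theta z (m + 1) *
            (8 ^ m * (100 * (PalLen.NPP z).ncard) ^ (m ^ 2))) :=
          Nat.mul_le_mul_right _ hEcard
      _ = 8 ^ (m + 1) * (100 * (PalLen.NPP z).ncard) ^ (m ^ 2 + (m + 1)) := by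
          rw [PalLen.theta, PalLen.hNPP]; ring
      _ ≤ 8 ^ (m + 1) * (100 * (PalLen.NPP z).ncard) ^ ((m + 1) ^ 2) := by
          refine Nat.mul_le_mul_left _ (Nat.pow_le_pow_right h1 ?_)
          nlinarith
end
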